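/- arXiv:1010.0507 — 4 statements merged into one kernel-verified Lean document; each statement's English description precedes it below -/
import Mathlib

section
/- For real q with 0 < q < 1, x1, x2 in [0,1], natural n >= 1 and 0 <= k <= n-1, the partial derivative of B_{k,n}(x1,x2|q) with respect to x1 equals (log q / (q-1)) * q^{x1} * n * B_{k-1,n-1}(x1,x2|q), where B_{-1,n-1} is interpreted as 0 when k = 0. -/
noncomputable def qNum (q x : ℝ) : ℝ := (1 - q ^ x) / (1 - q)

noncomputable def qBern (q : ℝ) (k n : ℕ) (x1 x2 : ℝ) : ℝ :=
  (n.choose k : ℝ) * (qNum q x1) ^ k * (qNum q⁻¹ (1 - x2)) ^ (n - k)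

theorem Nat.mul_choose_sub_one_eq (n j : ℕ) :
    n * (n - 1).choose j = n.choose (j + 1) * (j + 1) := by
  cases n with
  | zero => simp
  | succ m => simpa using Nat.add_one_mul_choose_eq m j

theorem hasDerivAt_qNum {q : ℝ} (hq0 : 0 < q) (x : ℝ) :
    HasDerivAt (qNum q) (Real.log q / (q - 1) * q ^ x) x := by
  have h := ((Real.hasStrictDerivAt_const_rpow hq0 x).hasDerivAt.const_sub 1).div_const (1 - q)
  refine h.congr_deriv ?_
  rw [← neg_div_neg_eq, neg_neg, neg_sub]
  ring

theorem qBern_zero_left (q : ℝ) (n : ℕ) (x1 x2 : ℝ) :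
    qBern q 0 n x1 x2 = qNum q⁻¹ (1 - x2) ^ n := by
  simp [qBern]

/-- The power rule applied to `[x1]_q ^ (j + 1)`, rewritten through
`n * C(n-1, j) = (j + 1) * C(n, j + 1)`. -/
theorem hasDerivAt_qBern_succ {q : ℝ} (hq0 : 0 < q) (j n : ℕ) (x1 x2 : ℝ) :
    HasDerivAt (fun t => qBern q (j + 1) n t x2)
      (Real.log q / (q - 1) * q ^ x1 * n * qBern q j (n - 1) x1 x2) x1 := by
  refine ((((hasDerivAt_qNum hq0 x1).pow (j + 1)).const_mul
    (n.choose (j + 1) : ℝ)).mul_const (qNum q⁻¹ (1 - x2) ^ (n - (j + 1)))).congr_deriv ?_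
  have hchoose : (n : ℝ) * ((n - 1).choose j : ℝ) = n.choose (j + 1) * (j + 1) := by
    exact_mod_cast Nat.mul_choose_sub_one_eq n j
  rw [qBern, show n - 1 - j = n - (j + 1) by omega]
  push_cast
  linear_combination -(Real.log q / (q - 1) * q ^ x1 * qNum q x1 ^ j *
    qNum q⁻¹ (1 - x2) ^ (n - (j + 1))) * hchoose

theorem qBern_deriv_x1_general (q : ℝ) (hq0 : 0 < q)
    (x1 x2 : ℝ)
    (n k : ℕ) :
    HasDerivAt (fun t : ℝ => qBern q k n t x2)
      (Real.log q / (q - 1) * q ^ x1 * n *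
        (if k = 0 then 0 else qBern q (k - 1) (n - 1) x1 x2)) x1 := by
  cases k with
  | zero => simpa [qBern_zero_left] using hasDerivAt_const x1 (qNum q⁻¹ (1 - x2) ^ n)
  | succ j => simpa using hasDerivAt_qBern_succ hq0 j n x1 x2

theorem qBern_deriv_x1 (q : ℝ) (hq0 : 0 < q) (hq1 : q < 1)
    (x1 x2 : ℝ) (hx1 : x1 ∈ Set.Icc (0:ℝ) 1) (hx2 : x2 ∈ Set.Icc (0:ℝ) 1)
    (n k : ℕ) (hn : 1 ≤ n) (hk : k ≤ n - 1) :
    HasDerivAt (fun t : ℝ => qBern q k n t x2)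
      (Real.log q / (q - 1) * q ^ x1 * n *
        (if k = 0 then 0 else qBern q (k - 1) (n - 1) x1 x2)) x1 :=
  qBern_deriv_x1_general q hq0 x1 x2 n k
end

section
/- For real q with 0 < q < 1, x1, x2 in [0,1], natural n >= 1 and 0 <= k <= n, the partial derivative of B_{k,n}(x1,x2|q) with respect to x2 equals (log q / (1-q)) * q^{x2} * n * B_{k,n-1}(x1,x2|q), where B_{k,n-1} = 0 if k > n-1. -/
theorem Nat.choose_mul_sub_eq (n k : ℕ) : n.choose k * (n - k) = n * (n - 1).choose k := by
  cases n with
  | zero => simp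
  | succ m => rw [Nat.add_sub_cancel, ← Nat.choose_mul_succ_eq, Nat.mul_comm]

/-- Clearing the denominator `q` keeps this valid at `q = 1`, where both sides are junk `0`. -/
theorem qNum_inv_one_sub {q : ℝ} (hq : 0 < q) (t : ℝ) :
    qNum q⁻¹ (1 - t) = (q ^ t - q) / (1 - q) := by
  have hq' : q ≠ 0 := hq.ne'
  rw [qNum, Real.inv_rpow hq.le, Real.rpow_sub hq, Real.rpow_one, inv_div,
    ← mul_div_mul_left _ _ hq', ← neg_div_neg_eq]
  congr 1 <;> field_simp <;> ring

theorem hasDerivAt_qNum_inv_one_sub {q : ℝ} (hq : 0 < q) (x : ℝ) :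
    HasDerivAt (fun t => qNum q⁻¹ (1 - t)) (Real.log q / (1 - q) * q ^ x) x := by
  simp only [qNum_inv_one_sub hq]
  refine (((Real.hasStrictDerivAt_const_rpow hq x).hasDerivAt.sub_const q).div_const
    (1 - q)).congr_deriv ?_
  ring

theorem qBern_deriv_x2_general (q : ℝ) (hq0 : 0 < q)
    (x1 x2 : ℝ)
    (n k : ℕ) :
    HasDerivAt (fun t : ℝ => qBern q k n x1 t)
      (Real.log q / (1 - q) * q ^ x2 * n * qBern q k (n - 1) x1 x2) x2 := by
  have hchoose : (n.choose k : ℝ) * ((n - k : ℕ) : ℝ) = n * ((n - 1).choose k : ℝ) := by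
    exact_mod_cast Nat.choose_mul_sub_eq n k
  unfold qBern
  refine (((hasDerivAt_qNum_inv_one_sub hq0 x2).fun_pow (n - k)).const_mul
    ((n.choose k : ℝ) * qNum q x1 ^ k)).congr_deriv ?_
  rw [Nat.sub_right_comm n 1 k]
  linear_combination (qNum q x1 ^ k * qNum q⁻¹ (1 - x2) ^ (n - k - 1)
    * (Real.log q / (1 - q) * q ^ x2)) * hchoose

theorem qBern_deriv_x2 (q : ℝ) (hq0 : 0 < q) (hq1 : q < 1)
    (x1 x2 : ℝ) (hx1 : x1 ∈ Set.Icc (0:ℝ) 1) (hx2 : x2 ∈ Set.Icc (0:ℝ) 1)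
    (n k : ℕ) (hn : 1 ≤ n) (hk : k ≤ n) :
    HasDerivAt (fun t : ℝ => qBern q k n x1 t)
      (Real.log q / (1 - q) * q ^ x2 * n * qBern q k (n - 1) x1 x2) x2 :=
  qBern_deriv_x2_general q hq0 x1 x2 n k
end

section
/- For real q with 0 < q < 1, x1, x2 in [0,1], and natural n >= 1, the sum over k from 0 to n of (k/n) * B_{k,n}(x1,x2|q) equals [x1]_q * (1 + [x1]_q - [x2]_q)^{n-1}. -/
/-! The weights `k / n` are absorbed by `k · C(n, k) = n · C(n - 1, k - 1)`, so the sum is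
`a (a + b)ⁿ⁻¹` by the binomial theorem, with `a = [x₁]_q` and `b = [1 - x₂]_{q⁻¹} = 1 - [x₂]_q`. -/

open Finset

theorem sum_range_mul_choose_mul_pow_mul_pow {R : Type*} [CommSemiring R] (a b : R) (n : ℕ) :
    ∑ k ∈ range (n + 1), (k * n.choose k : R) * a ^ k * b ^ (n - k)
      = n * a * (a + b) ^ (n - 1) := by
  cases n with
  | zero => simp
  | succ m =>
    rw [sum_range_succ', add_pow, mul_sum]
    simp only [Nat.cast_zero, zero_mul, add_zero, Nat.add_sub_cancel]
    refine sum_congr rfl fun i _ => ?_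
    have hchoose : ((i + 1 : ℕ) * (m + 1).choose (i + 1) : R) = (m + 1 : ℕ) * m.choose i := by
      rw [← Nat.cast_mul, ← Nat.cast_mul]
      exact congrArg (Nat.cast : ℕ → R) <| (mul_comm _ _).trans (Nat.add_one_mul_choose_eq m i).symm
    rw [hchoose, Nat.add_sub_add_right]
    push_cast
    ring

theorem qNum_inv_one_sub_s6 {q : ℝ} (hq0 : 0 < q) (hq1 : q ≠ 1) (x : ℝ) :
    qNum q⁻¹ (1 - x) = 1 - qNum q x := by
  have hpow : q⁻¹ ^ (1 - x) = q ^ x / q := by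
    rw [Real.inv_rpow hq0.le, ← Real.rpow_neg hq0.le, neg_sub, Real.rpow_sub hq0, Real.rpow_one]
  have hq : 1 - q ≠ 0 := sub_ne_zero.mpr hq1.symm
  have hq' : q - 1 ≠ 0 := sub_ne_zero.mpr hq1
  rw [qNum, qNum, hpow]
  field_simp
  ring

theorem qBern_sum_linear_general (q : ℝ) (hq0 : 0 < q) (hq1 : q < 1)
    (x1 x2 : ℝ)
    (n : ℕ) (hn : 1 ≤ n) :
    ∑ k ∈ Finset.range (n + 1), ((k : ℝ) / n) * qBern q k n x1 x2
      = qNum q x1 * (1 + qNum q x1 - qNum q x2) ^ (n - 1) := by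
  have hn0 : (n : ℝ) ≠ 0 := Nat.cast_ne_zero.mpr (by omega)
  have hmoment := sum_range_mul_choose_mul_pow_mul_pow (qNum q x1) (1 - qNum q x2) n
  simp only [qBern, qNum_inv_one_sub_s6 hq0 hq1.ne x2, div_mul_eq_mul_div, ← sum_div,
    ← mul_assoc] at hmoment ⊢
  rw [hmoment, div_eq_iff hn0]
  ring

theorem qBern_sum_linear (q : ℝ) (hq0 : 0 < q) (hq1 : q < 1)
    (x1 x2 : ℝ) (hx1 : x1 ∈ Set.Icc (0:ℝ) 1) (hx2 : x2 ∈ Set.Icc (0:ℝ) 1)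
    (n : ℕ) (hn : 1 ≤ n) :
    ∑ k ∈ Finset.range (n + 1), ((k : ℝ) / n) * qBern q k n x1 x2
      = qNum q x1 * (1 + qNum q x1 - qNum q x2) ^ (n - 1) :=
  qBern_sum_linear_general q hq0 hq1 x1 x2 n hn
end

section
/- Let p be a prime and q in C_p with |1-q|_p < 1, q^n != 1 for n >= 1. For all naturals n, the bosonic p-adic q-integral satisfies: integral over Z_p of [1-x+x1]_{q^{-1}}^n d mu_{q^{-1}}(x1) = (-1)^n q^n * integral over Z_p of [x+x1]_q^n d mu_q(x1). -/
/-- The q-number [m]_q = (1 - q^m)/(1 - q) for q in the p-adic numbers and integer m. -/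
noncomputable def qNumZ (p : ℕ) [Fact p.Prime] (q : ℚ_[p]) (m : ℤ) : ℚ_[p] :=
  (1 - q ^ m) / (1 - q)

/-- `IsPadicQIntegral p q f I` says the bosonic p-adic q-integral
`I_q(f) = lim_N (1/[p^N]_q) ∑_{x=0}^{p^N-1} f(x) q^x` exists and equals `I`. -/
def IsPadicQIntegral (p : ℕ) [Fact p.Prime] (q : ℚ_[p]) (f : ℕ → ℚ_[p]) (I : ℚ_[p]) : Prop :=
  Filter.Tendsto
    (fun N : ℕ => (∑ x ∈ Finset.range (p ^ N), f x * q ^ x) / qNumZ p q ((p : ℤ) ^ N))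
    Filter.atTop (nhds I)

/-! Expanding `[a + x]_Q ^ n` binomially in `Q ^ x` reduces the approximating sums of the
q-integral to `(∑_{x < p^N} (Q^(k+1))^x) / [p^N]_Q = [k+1]_{Q^(p^N)} / [k+1]_Q`, and these tend to
`(k+1) / [k+1]_Q` because `Q^(p^N) → 1` p-adically. This gives a closed form for the integral of
`[a + x]_Q ^ n`; since `[m]_{Q⁻¹} = Q^(1-m) [m]_Q`, the closed forms for `(Q⁻¹, 1 - a)` and
`(Q, a)` agree term by term up to the factor `(-Q)^n`. -/

open Filter Finset Topology

variable {p : ℕ} [Fact p.Prime]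

lemma norm_eq_one_of_norm_one_sub_lt_one {Q : ℚ_[p]} (hQ : ‖1 - Q‖ < 1) : ‖Q‖ = 1 :=
  (Padic.norm_eq_of_norm_sub_lt_left (by rwa [norm_one])).symm.trans norm_one

lemma norm_one_sub_inv {Q : ℚ_[p]} (hQ : ‖1 - Q‖ < 1) : ‖1 - Q⁻¹‖ = ‖1 - Q‖ := by
  have hQ1 := norm_eq_one_of_norm_one_sub_lt_one hQ
  have hQ0 : Q ≠ 0 := norm_ne_zero_iff.1 (by rw [hQ1]; exact one_ne_zero)
  rw [show 1 - Q⁻¹ = -(1 - Q) * Q⁻¹ by field_simp; ring, norm_mul, norm_neg, norm_inv, hQ1,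
    inv_one, mul_one]

lemma tendsto_pow_prime_pow_nhds_one {Q : ℚ_[p]} (hQ : ‖1 - Q‖ < 1) :
    Tendsto (fun N : ℕ => Q ^ p ^ N) atTop (𝓝 1) := by
  let z : ℤ_[p] := ⟨Q, (norm_eq_one_of_norm_one_sub_lt_one hQ).le⟩
  have hdvd : (p : ℤ_[p]) ∣ z - 1 := (PadicInt.norm_lt_one_iff_dvd _).1 (by
    rw [← norm_neg, neg_sub]; exact hQ)
  have hbound (N : ℕ) : ‖Q ^ p ^ N - 1‖ ≤ (p : ℝ)⁻¹ ^ (N + 1) := by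
    obtain ⟨c, hc⟩ := dvd_sub_pow_of_dvd_sub hdvd N
    rw [one_pow] at hc
    calc ‖Q ^ p ^ N - 1‖ = ‖z ^ p ^ N - 1‖ := rfl
      _ = ‖(p : ℤ_[p])‖ ^ (N + 1) * ‖c‖ := by rw [hc, norm_mul, norm_pow]
      _ ≤ (p : ℝ)⁻¹ ^ (N + 1) := by
        rw [PadicInt.norm_p]
        exact mul_le_of_le_one_right (by positivity) c.norm_le_one
  have hp : (p : ℝ)⁻¹ < 1 := inv_lt_one_of_one_lt₀ (mod_cast (Fact.out : p.Prime).one_lt)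
  rw [tendsto_iff_norm_sub_tendsto_zero]
  exact squeeze_zero (fun _ => norm_nonneg _) hbound
    ((tendsto_pow_atTop_nhds_zero_of_lt_one (by positivity) hp).comp (tendsto_add_atTop_nat 1))

lemma qNumZ_natCast (Q : ℚ_[p]) (m : ℕ) : qNumZ p Q m = (1 - Q ^ m) / (1 - Q) := by
  rw [qNumZ, zpow_natCast]

lemma qNumZ_inv {Q : ℚ_[p]} (hQ : Q ≠ 0) (m : ℤ) : qNumZ p Q⁻¹ m = Q ^ (1 - m) * qNumZ p Q m := by
  rcases eq_or_ne Q 1 with rfl | hQ1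
  · simp [qNumZ]
  have h1 : 1 - Q ≠ 0 := sub_ne_zero.2 hQ1.symm
  rw [qNumZ, qNumZ, inv_zpow', zpow_sub₀ hQ, zpow_one, zpow_neg]
  field_simp
  ring

/-- Both sides equal `[k M]_Q / ([k]_Q [M]_Q)`. -/
lemma geom_sum_pow_div_qNumZ_comm {Q : ℚ_[p]} {M k : ℕ} (hM : Q ^ M ≠ 1) (hk : Q ^ k ≠ 1) :
    (∑ z ∈ range M, (Q ^ k) ^ z) / qNumZ p Q M = (∑ j ∈ range k, (Q ^ M) ^ j) / qNumZ p Q k := by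
  have h1 : 1 - Q ≠ 0 := sub_ne_zero.2 fun h => hM (h ▸ one_pow M)
  have hM' : 1 - Q ^ M ≠ 0 := sub_ne_zero.2 hM.symm
  have hk' : 1 - Q ^ k ≠ 0 := sub_ne_zero.2 hk.symm
  rw [geom_sum_eq hk, geom_sum_eq hM, qNumZ_natCast, qNumZ_natCast, ← pow_mul, ← pow_mul,
    mul_comm k M]
  field_simp
  ring

lemma qNumZ_add_pow_mul_pow {Q : ℚ_[p]} (hQ : Q ≠ 0) (a : ℤ) (n z : ℕ) :
    qNumZ p Q (a + z) ^ n * Q ^ z =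
      ∑ k ∈ range (n + 1), n.choose k * (-Q ^ a) ^ k / (1 - Q) ^ n * (Q ^ (k + 1)) ^ z := by
  rw [qNumZ, zpow_add₀ hQ, zpow_natCast, div_pow, sub_eq_neg_add, add_pow, sum_div, sum_mul]
  refine sum_congr rfl fun k _ => ?_
  ring

noncomputable def qNumAddPowIntegral (p : ℕ) [Fact p.Prime] (Q : ℚ_[p]) (a : ℤ) (n : ℕ) : ℚ_[p] :=
  ∑ k ∈ range (n + 1), n.choose k * (-Q ^ a) ^ k / (1 - Q) ^ n * ((k + 1) / qNumZ p Q (k + 1))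

lemma sum_qNumZ_add_pow_mul_pow_div {Q : ℚ_[p]} (hQ0 : Q ≠ 0) (hQ : ∀ m : ℕ, 1 ≤ m → Q ^ m ≠ 1)
    (a : ℤ) (n : ℕ) {M : ℕ} (hM : 1 ≤ M) :
    (∑ z ∈ range M, qNumZ p Q (a + z) ^ n * Q ^ z) / qNumZ p Q M =
      ∑ k ∈ range (n + 1), n.choose k * (-Q ^ a) ^ k / (1 - Q) ^ n *
        ((∑ j ∈ range (k + 1), (Q ^ M) ^ j) / qNumZ p Q (k + 1)) := by
  simp_rw [qNumZ_add_pow_mul_pow hQ0]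
  rw [sum_comm, sum_div]
  refine sum_congr rfl fun k _ => ?_
  rw [← mul_sum, mul_div_assoc, geom_sum_pow_div_qNumZ_comm (hQ M hM) (hQ (k + 1) k.succ_pos)]
  push_cast
  rfl

theorem isPadicQIntegral_qNumZ_add_pow {Q : ℚ_[p]} (hQ : ‖1 - Q‖ < 1)
    (hQ' : ∀ m : ℕ, 1 ≤ m → Q ^ m ≠ 1) (a : ℤ) (n : ℕ) :
    IsPadicQIntegral p Q (fun z => qNumZ p Q (a + z) ^ n) (qNumAddPowIntegral p Q a n) := by
  have hQ0 : Q ≠ 0 := by rintro rfl; simp at hQ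
  have hsum (N : ℕ) := sum_qNumZ_add_pow_mul_pow_div hQ0 hQ' a n
    (Nat.one_le_pow N p (Fact.out : p.Prime).pos)
  push_cast at hsum
  unfold IsPadicQIntegral
  simp_rw [hsum]
  refine tendsto_finsetSum _ fun k _ => tendsto_const_nhds.mul (Tendsto.div_const ?_ _)
  simpa using tendsto_finsetSum (range (k + 1)) fun j _ => (tendsto_pow_prime_pow_nhds_one hQ).pow j

lemma IsPadicQIntegral.unique {Q : ℚ_[p]} {f : ℕ → ℚ_[p]} {I J : ℚ_[p]}
    (hI : IsPadicQIntegral p Q f I) (hJ : IsPadicQIntegral p Q f J) : I = J :=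
  tendsto_nhds_unique hI hJ

lemma qNumAddPowIntegral_inv {Q : ℚ_[p]} (hQ : Q ≠ 0) (a : ℤ) (n : ℕ) :
    qNumAddPowIntegral p Q⁻¹ (1 - a) n = (-Q) ^ n * qNumAddPowIntegral p Q a n := by
  rw [qNumAddPowIntegral, qNumAddPowIntegral, mul_sum]
  refine sum_congr rfl fun k _ => ?_
  rw [qNumZ_inv hQ, show 1 - Q⁻¹ = (1 - Q) / -Q by field_simp; ring, inv_zpow', neg_sub,
    zpow_sub₀ hQ, zpow_one, show (1 : ℤ) - (k + 1) = -(k : ℤ) by ring, zpow_neg, zpow_natCast,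
    ← neg_div, div_pow, div_pow]
  field_simp

theorem padic_integral_reflection (p : ℕ) [Fact p.Prime] (q : ℚ_[p])
    (hq : ‖1 - q‖ < 1) (hq' : ∀ m : ℕ, 1 ≤ m → q ^ m ≠ 1)
    (x : ℤ) (n : ℕ) (I1 I2 : ℚ_[p])
    (h1 : IsPadicQIntegral p q⁻¹ (fun x1 : ℕ => (qNumZ p q⁻¹ (1 - x + x1)) ^ n) I1)
    (h2 : IsPadicQIntegral p q (fun x1 : ℕ => (qNumZ p q (x + x1)) ^ n) I2) :
    I1 = (-1 : ℚ_[p]) ^ n * q ^ n * I2 := by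
  have hq0 : q ≠ 0 := by rintro rfl; simp at hq
  have hq_inv : ‖1 - q⁻¹‖ < 1 := (norm_one_sub_inv hq).trans_lt hq
  have hq_inv' (m : ℕ) (hm : 1 ≤ m) : q⁻¹ ^ m ≠ 1 := by simpa using hq' m hm
  rw [h1.unique (isPadicQIntegral_qNumZ_add_pow hq_inv hq_inv' (1 - x) n),
    h2.unique (isPadicQIntegral_qNumZ_add_pow hq hq' x n), qNumAddPowIntegral_inv hq0, neg_pow]
end
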